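/- Let N ≥ 2 and let θ : {1,…,N} → [−π,π) be a configuration on the open path with wrapped increments δ(i) := wrap_π(θ(i+1) − θ(i)) for i = 1,…,N−1. Let θ' be obtained from θ by a midpoint update at any edge (k,k+1) with 1 ≤ k ≤ N−1, and let δ'(i) be the wrapped increments of θ'. Then ∑_{i=1}^{N−1} |δ'(i)| ≤ ∑_{i=1}^{N−1} |δ(i)|; i.e., the total absolute increment on the path is nonincreasing under midpoint updates. -/

import Mathlib

open Real

/-- The wrap operator `wrap_π(a) = a - 2π⌊(a+π)/(2π)⌋`, taking values in `[-π, π)`. -/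
noncomputable def wrapPi (a : ℝ) : ℝ := a - 2 * π * ⌊(a + π) / (2 * π)⌋

/-
A midpoint update sets the increment on edge `k` to zero and perturbs each of the two
neighbouring increments by `± δ(k)/2` modulo `2π`. Since wrapping never increases the absolute
value, each neighbour grows by at most `|δ(k)|/2`, so the loss `|δ(k)|` on edge `k` pays for both.
-/

open AddCommGroup Finset

theorem Finset.sum_le_sum_of_transfer {ι M : Type*} [DecidableEq ι] [AddCommMonoid M]
    [PartialOrder M] [IsOrderedAddMonoid M] {s : Finset ι} {f g : ι → M} {k a b : ι} {c : M}
    (hk : k ∈ s) (hc : 0 ≤ c) (hgk : g k + (c + c) ≤ f k)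
    (hg : ∀ i ∈ s, i ≠ k → g i ≤ f i + if i = a ∨ i = b then c else 0) :
    ∑ i ∈ s, g i ≤ ∑ i ∈ s, f i := by
  have gain_le : ∑ i ∈ s.erase k, (if i = a ∨ i = b then c else 0) ≤ c + c :=
    calc ∑ i ∈ s.erase k, (if i = a ∨ i = b then c else 0)
        ≤ ∑ i ∈ s.erase k, ((if i = a then c else 0) + if i = b then c else 0) := by
          gcongr with i
          split_ifs <;> simp_all [le_add_of_nonneg_right]
      _ ≤ c + c := by
          rw [sum_add_distrib, sum_ite_eq', sum_ite_eq']
          gcongr <;> split_ifs <;> simp [hc]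
  calc ∑ i ∈ s, g i = g k + ∑ i ∈ s.erase k, g i := (add_sum_erase s g hk).symm
    _ ≤ g k + ∑ i ∈ s.erase k, (f i + if i = a ∨ i = b then c else 0) := by
        gcongr with i hi
        exact hg i (mem_of_mem_erase hi) (ne_of_mem_erase hi)
    _ ≤ g k + (∑ i ∈ s.erase k, f i + (c + c)) := by
        rw [sum_add_distrib]
        gcongr
    _ ≤ f k + ∑ i ∈ s.erase k, f i := by
        rw [add_comm _ (c + c), ← add_assoc]
        gcongr
    _ = ∑ i ∈ s, f i := add_sum_erase s f hk

lemma wrapPi_eq_toIcoMod (a : ℝ) : wrapPi a = toIcoMod two_pi_pos (-π) a := by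
  rw [toIcoMod, toIcoDiv_eq_floor, wrapPi, sub_neg_eq_add, zsmul_eq_mul, mul_comm]

lemma wrapPi_mem_Ico (a : ℝ) : wrapPi a ∈ Set.Ico (-π) π := by
  simpa [wrapPi_eq_toIcoMod, two_mul] using toIcoMod_mem_Ico two_pi_pos (-π) a

lemma wrapPi_eq_self {a : ℝ} (ha : a ∈ Set.Ico (-π) π) : wrapPi a = a := by
  rw [wrapPi_eq_toIcoMod, toIcoMod_eq_self]
  simpa [two_mul] using ha

lemma wrapPi_modEq (a : ℝ) : wrapPi a ≡ a [PMOD 2 * π] := by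
  rw [← toIcoMod_inj two_pi_pos (c := -π), wrapPi_eq_toIcoMod, toIcoMod_toIcoMod]

lemma wrapPi_congr {a b : ℝ} (h : a ≡ b [PMOD 2 * π]) : wrapPi a = wrapPi b := by
  rw [wrapPi_eq_toIcoMod, wrapPi_eq_toIcoMod, toIcoMod_inj]
  exact h

lemma wrapPi_zero : wrapPi 0 = 0 :=
  wrapPi_eq_self ⟨neg_nonpos.mpr pi_pos.le, pi_pos⟩

lemma abs_wrapPi_le (a : ℝ) : |wrapPi a| ≤ |a| := by
  by_cases ha : a ∈ Set.Ico (-π) π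
  · rw [wrapPi_eq_self ha]
  · have hπ : π ≤ |a| := by
      by_contra! h
      exact ha ⟨(abs_lt.mp h).1.le, (abs_lt.mp h).2⟩
    obtain ⟨h₁, h₂⟩ := wrapPi_mem_Ico a
    exact (abs_le.mpr ⟨h₁, h₂.le⟩).trans hπ

lemma abs_wrapPi_add_le (a b : ℝ) : |wrapPi (a + b)| ≤ |wrapPi a| + |b| :=
  calc |wrapPi (a + b)| = |wrapPi (wrapPi a + b)| := by
        rw [wrapPi_congr ((wrapPi_modEq a).add_right b)]
    _ ≤ |wrapPi a + b| := abs_wrapPi_le _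
    _ ≤ |wrapPi a| + |b| := abs_add_le _ _

noncomputable def wrappedIncrement (θ : ℕ → ℝ) (i : ℕ) : ℝ := wrapPi (θ (i + 1) - θ i)

noncomputable def midpointUpdate (θ : ℕ → ℝ) (k : ℕ) : ℕ → ℝ := fun i =>
  if i = k then wrapPi (θ k + wrappedIncrement θ k / 2)
  else if i = k + 1 then wrapPi (θ (k + 1) - wrappedIncrement θ k / 2)
  else θ i

section midpointUpdate

variable (θ : ℕ → ℝ) (k : ℕ)

lemma midpointUpdate_self : midpointUpdate θ k k = wrapPi (θ k + wrappedIncrement θ k / 2) :=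
  if_pos rfl

lemma midpointUpdate_succ_self :
    midpointUpdate θ k (k + 1) = wrapPi (θ (k + 1) - wrappedIncrement θ k / 2) := by
  simp [midpointUpdate]

lemma midpointUpdate_of_ne {i : ℕ} (h₁ : i ≠ k) (h₂ : i ≠ k + 1) :
    midpointUpdate θ k i = θ i := by
  simp [midpointUpdate, h₁, h₂]

lemma wrappedIncrement_midpointUpdate_self : wrappedIncrement (midpointUpdate θ k) k = 0 := by
  set δ := wrappedIncrement θ k
  rw [wrappedIncrement, midpointUpdate_self, midpointUpdate_succ_self,
    wrapPi_congr ((wrapPi_modEq _).sub (wrapPi_modEq _)),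
    show θ (k + 1) - δ / 2 - (θ k + δ / 2) = θ (k + 1) - θ k - δ by ring]
  exact (wrapPi_congr ((wrapPi_modEq _).sub_left _)).trans (by rw [sub_self, wrapPi_zero])

lemma abs_wrappedIncrement_midpointUpdate_pred (j : ℕ) :
    |wrappedIncrement (midpointUpdate θ (j + 1)) j|
      ≤ |wrappedIncrement θ j| + |wrappedIncrement θ (j + 1)| / 2 := by
  set δ := wrappedIncrement θ (j + 1)
  rw [wrappedIncrement, midpointUpdate_self, midpointUpdate_of_ne θ _ (by omega) (by omega),
    wrapPi_congr ((wrapPi_modEq _).sub_right _),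
    show θ (j + 1) + δ / 2 - θ j = θ (j + 1) - θ j + δ / 2 by ring]
  exact (abs_wrapPi_add_le _ _).trans_eq (by rw [abs_div, abs_two]; rfl)

lemma abs_wrappedIncrement_midpointUpdate_succ :
    |wrappedIncrement (midpointUpdate θ k) (k + 1)|
      ≤ |wrappedIncrement θ (k + 1)| + |wrappedIncrement θ k| / 2 := by
  set δ := wrappedIncrement θ k
  rw [wrappedIncrement, midpointUpdate_succ_self, midpointUpdate_of_ne θ _ (by omega) (by omega),
    wrapPi_congr ((wrapPi_modEq _).sub_left _),
    show θ (k + 1 + 1) - (θ (k + 1) - δ / 2) = θ (k + 1 + 1) - θ (k + 1) + δ / 2 by ring]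
  exact (abs_wrapPi_add_le _ _).trans_eq (by rw [abs_div, abs_two]; rfl)

lemma wrappedIncrement_midpointUpdate_of_ne {i : ℕ} (h₁ : i + 1 ≠ k) (h₂ : i ≠ k)
    (h₃ : i ≠ k + 1) : wrappedIncrement (midpointUpdate θ k) i = wrappedIncrement θ i := by
  rw [wrappedIncrement, wrappedIncrement, midpointUpdate_of_ne θ k h₂ h₃,
    midpointUpdate_of_ne θ k h₁ (by omega)]

lemma abs_wrappedIncrement_midpointUpdate_le {i : ℕ} (hik : i ≠ k) :
    |wrappedIncrement (midpointUpdate θ k) i|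
      ≤ |wrappedIncrement θ i|
        + if i = k - 1 ∨ i = k + 1 then |wrappedIncrement θ k| / 2 else 0 := by
  by_cases hpred : i + 1 = k
  · subst hpred
    simpa using abs_wrappedIncrement_midpointUpdate_pred θ i
  by_cases hsucc : i = k + 1
  · subst hsucc
    simpa using abs_wrappedIncrement_midpointUpdate_succ θ k
  rw [wrappedIncrement_midpointUpdate_of_ne θ k hpred hik hsucc, if_neg (by omega), add_zero]

end midpointUpdate

theorem path_total_increment_nonincreasing_general
    (N : ℕ)
    (θ : ℕ → ℝ)
    (k : ℕ) (hk1 : 1 ≤ k) (hkN : k ≤ N - 1)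
    (θ' : ℕ → ℝ)
    (hθ' : θ' = fun i =>
      if i = k then wrapPi (θ k + wrapPi (θ (k + 1) - θ k) / 2)
      else if i = k + 1 then wrapPi (θ (k + 1) - wrapPi (θ (k + 1) - θ k) / 2)
      else θ i) :
    ∑ i ∈ Finset.Icc 1 (N - 1), |wrapPi (θ' (i + 1) - θ' i)|
      ≤ ∑ i ∈ Finset.Icc 1 (N - 1), |wrapPi (θ (i + 1) - θ i)| := by
  subst hθ'
  show ∑ i ∈ Icc 1 (N - 1), |wrappedIncrement (midpointUpdate θ k) i|
    ≤ ∑ i ∈ Icc 1 (N - 1), |wrappedIncrement θ i|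
  refine Finset.sum_le_sum_of_transfer (mem_Icc.mpr ⟨hk1, hkN⟩) (by positivity) ?_
    (fun i _ hik => abs_wrappedIncrement_midpointUpdate_le θ k hik)
  rw [wrappedIncrement_midpointUpdate_self, abs_zero, zero_add, add_halves]

/-- On the open path, a midpoint update at any edge `(k,k+1)` does not
increase the total absolute wrapped increment `∑_{i=1}^{N-1} |δ(i)|`. -/
theorem path_total_increment_nonincreasing
    (N : ℕ) (hN : 2 ≤ N)
    (θ : ℕ → ℝ) (hθ : ∀ i : ℕ, 1 ≤ i → i ≤ N → θ i ∈ Set.Ico (-π) π)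
    (k : ℕ) (hk1 : 1 ≤ k) (hkN : k ≤ N - 1)
    (θ' : ℕ → ℝ)
    (hθ' : θ' = fun i =>
      if i = k then wrapPi (θ k + wrapPi (θ (k + 1) - θ k) / 2)
      else if i = k + 1 then wrapPi (θ (k + 1) - wrapPi (θ (k + 1) - θ k) / 2)
      else θ i) :
    ∑ i ∈ Finset.Icc 1 (N - 1), |wrapPi (θ' (i + 1) - θ' i)|
      ≤ ∑ i ∈ Finset.Icc 1 (N - 1), |wrapPi (θ (i + 1) - θ i)| :=
  path_total_increment_nonincreasing_general N θ k hk1 hkN θ' hθ'
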